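/- arXiv:2008.11480 — 8 statements merged into one kernel-verified Lean document; each statement's English description precedes it below -/
import Mathlib

section
/- Let A and S be real symmetric positive definite n×n matrices such that 2S − A is also positive definite. Then the spectral radius of the matrix I − S⁻¹A is strictly less than 1 (equivalently, every complex eigenvalue of I − S⁻¹A has modulus less than 1). -/
/-!
If `A v = λ • S v` for some `v ≠ 0`, then `λ = v* A v / v* S v` is a quotient of positive reals,
and `v* (2S - A) v > 0` gives `λ < 2`, so `|1 - λ| < 1`. An eigenvalue `μ` of `1 - S⁻¹ A` is
`1 - λ` for such a `λ`. Complex eigenvalues of the real matrix are handled by running this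
argument over `ℂ`, where the complexifications of `A`, `S` and `2S - A` stay positive definite.
-/

open Matrix
open scoped ComplexOrder

variable {n 𝕜 : Type*} [Fintype n] [RCLike 𝕜]

theorem RingHom.map_nonsing_inv [DecidableEq n] {K L : Type*} [Field K] [Field L] (f : K →+* L)
    (M : Matrix n n K) : f.mapMatrix M⁻¹ = (f.mapMatrix M)⁻¹ := by
  have hadj : M.adjugate.map f = (M.map f).adjugate := f.map_adjugate M
  have hdet : (M.map f).det = f M.det := (f.map_det M).symm
  ext i j
  simp [inv_def, Ring.inverse_eq_inv', ← hadj, hdet]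

theorem Matrix.exists_mulVec_eq_smul_of_mem_spectrum [DecidableEq n] {M : Matrix n n 𝕜} {μ : 𝕜}
    (hμ : μ ∈ spectrum 𝕜 M) : ∃ v ≠ 0, M *ᵥ v = μ • v := by
  rw [← spectrum_toLin', ← Module.End.hasEigenvalue_iff_mem_spectrum] at hμ
  obtain ⟨v, hv⟩ := hμ.exists_hasEigenvector
  exact ⟨v, hv.2, by simpa using hv.apply_eq_smul⟩

theorem Matrix.re_star_dotProduct_map_ofReal_mulVec (M : Matrix n n ℝ) (x : n → 𝕜) :
    RCLike.re (star x ⬝ᵥ M.map (algebraMap ℝ 𝕜) *ᵥ x) =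
      (fun i ↦ RCLike.re (x i)) ⬝ᵥ M *ᵥ (fun i ↦ RCLike.re (x i)) +
        (fun i ↦ RCLike.im (x i)) ⬝ᵥ M *ᵥ (fun i ↦ RCLike.im (x i)) := by
  simp only [dotProduct, mulVec, Finset.mul_sum, ← Finset.sum_add_distrib, map_sum]
  refine Finset.sum_congr rfl fun i _ ↦ Finset.sum_congr rfl fun j _ ↦ ?_
  simp [RCLike.mul_re]

theorem Matrix.PosDef.map_ofReal {M : Matrix n n ℝ} (hM : M.PosDef) :
    (M.map (algebraMap ℝ 𝕜)).PosDef := by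
  have hherm : (M.map (algebraMap ℝ 𝕜)).IsHermitian := hM.1.map _ fun _ ↦ by simp
  refine .of_dotProduct_mulVec_pos hherm fun x hx ↦ ?_
  rw [RCLike.pos_iff, hherm.im_star_dotProduct_mulVec_self, re_star_dotProduct_map_ofReal_mulVec]
  refine ⟨?_, rfl⟩
  have hpos {y : n → ℝ} (hy : y ≠ 0) : 0 < y ⬝ᵥ M *ᵥ y := by
    simpa using hM.dotProduct_mulVec_pos hy
  have hnonneg (y : n → ℝ) : 0 ≤ y ⬝ᵥ M *ᵥ y := by
    simpa using hM.posSemidef.dotProduct_mulVec_nonneg y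
  have hreim : (fun i ↦ RCLike.re (x i)) ≠ 0 ∨ (fun i ↦ RCLike.im (x i)) ≠ 0 := by
    by_contra! h
    exact hx <| funext fun i ↦
      RCLike.ext (by simpa using congrFun h.1 i) (by simpa using congrFun h.2 i)
  rcases hreim with hre | him
  · exact add_pos_of_pos_of_nonneg (hpos hre) (hnonneg _)
  · exact add_pos_of_nonneg_of_pos (hnonneg _) (hpos him)

theorem RCLike.norm_one_sub_div_lt_one {a s : 𝕜} (ha : 0 < a) (hs : 0 < s)
    (has : 0 < 2 * s - a) : ‖1 - a / s‖ < 1 := by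
  obtain ⟨a, ha₀, rfl⟩ := RCLike.pos_iff_exists_ofReal.mp ha
  obtain ⟨s, hs₀, rfl⟩ := RCLike.pos_iff_exists_ofReal.mp hs
  have has₀ : a < 2 * s := by simpa using (RCLike.pos_iff.mp has).1
  rw [← RCLike.ofReal_div, ← RCLike.ofReal_one, ← RCLike.ofReal_sub, RCLike.norm_ofReal, abs_lt]
  constructor
  · have : a / s < 2 := (div_lt_iff₀ hs₀).mpr has₀
    linarith
  · linarith [div_pos ha₀ hs₀]

theorem Matrix.norm_one_sub_lt_one_of_mulVec_eq_smul_mulVec {A S : Matrix n n 𝕜}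
    (hA : A.PosDef) (hS : S.PosDef) (h2SA : (2 • S - A).PosDef) {v : n → 𝕜} (hv : v ≠ 0) {c : 𝕜}
    (hc : A *ᵥ v = c • S *ᵥ v) : ‖1 - c‖ < 1 := by
  have hs := hS.dotProduct_mulVec_pos hv
  have hc_eq : c = (star v ⬝ᵥ A *ᵥ v) / (star v ⬝ᵥ S *ᵥ v) := by
    rw [eq_div_iff hs.ne', hc, dotProduct_smul, smul_eq_mul]
  have h2 := h2SA.dotProduct_mulVec_pos hv
  rw [sub_mulVec, dotProduct_sub, two_smul, add_mulVec, dotProduct_add, ← two_mul] at h2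
  exact hc_eq ▸ RCLike.norm_one_sub_div_lt_one (hA.dotProduct_mulVec_pos hv) hs h2

theorem Matrix.norm_lt_one_of_mem_spectrum_one_sub_inv_mul [DecidableEq n] {A S : Matrix n n 𝕜}
    (hA : A.PosDef) (hS : S.PosDef) (h2SA : (2 • S - A).PosDef) {μ : 𝕜}
    (hμ : μ ∈ spectrum 𝕜 (1 - S⁻¹ * A)) : ‖μ‖ < 1 := by
  obtain ⟨v, hv, hμv⟩ := exists_mulVec_eq_smul_of_mem_spectrum hμ
  have hSA : S⁻¹ *ᵥ A *ᵥ v = (1 - μ) • v := by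
    rw [mulVec_mulVec, sub_smul, one_smul, ← hμv, sub_mulVec, one_mulVec, sub_sub_cancel]
  have hAv : A *ᵥ v = (1 - μ) • S *ᵥ v :=
    calc A *ᵥ v = S *ᵥ S⁻¹ *ᵥ A *ᵥ v := by
          rw [mulVec_mulVec, mul_nonsing_inv _ (S.isUnit_iff_isUnit_det.mp hS.isUnit), one_mulVec]
      _ = (1 - μ) • S *ᵥ v := by rw [hSA, mulVec_smul]
  simpa using norm_one_sub_lt_one_of_mulVec_eq_smul_mulVec hA hS h2SA hv hAv

/-- If `A` and `S` are real symmetric positive definite matrices such that `2S - A`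
is also positive definite, then every complex eigenvalue of `I - S⁻¹A` has modulus
less than one, i.e. the spectral radius of `I - S⁻¹A` is strictly less than `1`. -/
theorem stmt_0 {m : ℕ} (A S : Matrix (Fin m) (Fin m) ℝ)
    (hA : A.PosDef) (hS : S.PosDef) (h2SA : (2 • S - A).PosDef) :
    ∀ μ : ℂ, μ ∈ spectrum ℂ (((1 : Matrix (Fin m) (Fin m) ℝ) - S⁻¹ * A).map
      (algebraMap ℝ ℂ)) → ‖μ‖ < 1 := by
  intro μ hμ
  let f := (algebraMap ℝ ℂ).mapMatrix (m := Fin m)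
  have hf2SA : f (2 • S - A) = 2 • f S - f A := by rw [map_sub, map_nsmul]
  have hfJ : f (1 - S⁻¹ * A) = 1 - (f S)⁻¹ * f A := by
    rw [map_sub, map_one, map_mul, RingHom.map_nonsing_inv]
  exact norm_lt_one_of_mem_spectrum_one_sub_inv_mul hA.map_ofReal hS.map_ofReal
    (hf2SA ▸ h2SA.map_ofReal) (hfJ ▸ hμ)
end

section
/- Let S, D be n×n matrices over a ring with S invertible and A = S − D. Fix integers h ≥ 1 and n ≥ 2. Initialize G₀ = (Σ_{j=0}^{h−1} (S⁻¹D)^j) S⁻¹ and iterate the Newton–Schulz recursion F_{k−1} = I − G_{k−1}A, G_k = (Σ_{j=0}^{n−1} F_{k−1}^j) G_{k−1}. Then for every k ≥ 0, the inversion error equals F_k = I − G_k A = (S⁻¹D)^{h n^k}. -/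
/-!
Both the power-series initialization and each Newton–Schulz step have the form
`G ↦ (∑_{j<n} X^j) * G'` with `G' * A = 1 - X`, so the telescoping identity
`(∑_{j<n} X^j)(1 - X) = 1 - X^n` shows that the new error `1 - G A` is `X^n`. The initial error
is therefore `(S⁻¹D)^h`, and each step raises the current error to the `n`-th power.
-/

open Finset

section GeomSum

variable {α : Type*} [Ring α]

theorem one_sub_geom_sum_mul_one_sub (x : α) (n : ℕ) :
    1 - (∑ i ∈ range n, x ^ i) * (1 - x) = x ^ n := by
  rw [geom_sum_mul_neg, sub_sub_cancel]

theorem one_sub_geom_sum_mul_mul_sub_of_mul_eq_one {s' s d : α} (hs : s' * s = 1) (h : ℕ) :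
    1 - (∑ i ∈ range h, (s' * d) ^ i) * s' * (s - d) = (s' * d) ^ h := by
  rw [mul_assoc, mul_sub, hs, one_sub_geom_sum_mul_one_sub]

theorem one_sub_newtonSchulz_step_mul (g a : α) (n : ℕ) :
    1 - (∑ i ∈ range n, (1 - g * a) ^ i) * g * a = (1 - g * a) ^ n := by
  simpa only [sub_sub_cancel, mul_assoc] using one_sub_geom_sum_mul_one_sub (1 - g * a) n

end GeomSum

theorem stmt_4_general {m : ℕ} {R : Type*} [CommRing R] (S D : Matrix (Fin m) (Fin m) R)
    (hS : IsUnit S.det) (A : Matrix (Fin m) (Fin m) R) (hA : A = S - D)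
    (h n : ℕ)
    (G : ℕ → Matrix (Fin m) (Fin m) R)
    (hG0 : G 0 = (∑ j ∈ range h, (S⁻¹ * D) ^ j) * S⁻¹)
    (hG : ∀ k : ℕ, G (k + 1) = (∑ j ∈ range n, (1 - G k * A) ^ j) * G k) :
    ∀ k : ℕ, (1 : Matrix (Fin m) (Fin m) R) - G k * A = (S⁻¹ * D) ^ (h * n ^ k) := by
  intro k
  induction k with
  | zero =>
    rw [hG0, hA, one_sub_geom_sum_mul_mul_sub_of_mul_eq_one (S.nonsing_inv_mul hS),
      pow_zero, mul_one]
  | succ k ih =>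
    rw [hG k, one_sub_newtonSchulz_step_mul, ih, ← pow_mul, pow_succ, mul_assoc]

open Finset in
/-- Error model of the Newton–Schulz iteration of order `n` initialized by the
order-`h` power series expansion for the splitting `A = S - D`: for all `k`,
`F_k = I - G_k A = (S⁻¹D)^(h·nᵏ)`. -/
theorem stmt_4 {m : ℕ} {R : Type*} [CommRing R] (S D : Matrix (Fin m) (Fin m) R)
    (hS : IsUnit S.det) (A : Matrix (Fin m) (Fin m) R) (hA : A = S - D)
    (h n : ℕ) (hh : 1 ≤ h) (hn : 2 ≤ n)
    (G : ℕ → Matrix (Fin m) (Fin m) R)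
    (hG0 : G 0 = (∑ j ∈ range h, (S⁻¹ * D) ^ j) * S⁻¹)
    (hG : ∀ k : ℕ, G (k + 1) = (∑ j ∈ range n, (1 - G k * A) ^ j) * G k) :
    ∀ k : ℕ, (1 : Matrix (Fin m) (Fin m) R) - G k * A = (S⁻¹ * D) ^ (h * n ^ k) :=
  stmt_4_general S D hS A hA h n G hG0 hG
end

section
/- Let A, X be n×n matrices over a ring, set Y = I − XA, and for integers p ≥ 0, w ≥ 1 define U = (Σ_{d=0}^{p} Y^d) X and Z = (Σ_{j=0}^{w−1} Y^{(p+1)j}) U. Then (i) I − UA = Y^{p+1}, and (ii) Z = (Σ_{j=0}^{h−1} Y^j) X where h = w(p+1); consequently I − ZA = Y^{h}. -/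
open Finset in
theorem geom_sum_pow_mul_geom_sum {R : Type*} [Semiring R] (Y : R) (k w : ℕ) :
    (∑ j ∈ range w, Y ^ (k * j)) * ∑ d ∈ range k, Y ^ d = ∑ j ∈ range (w * k), Y ^ j := by
  induction w with
  | zero => simp
  | succ w ih =>
    rw [sum_range_succ, add_mul, ih, mul_sum, add_one_mul w k, sum_range_add]
    simp_rw [← pow_add, mul_comm k w]

open Finset in
theorem one_sub_geom_sum_mul_mul {R : Type*} [Ring R] {A X Y : R} (hY : Y = 1 - X * A) (n : ℕ) :
    1 - (∑ j ∈ range n, Y ^ j) * X * A = Y ^ n := by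
  rw [mul_assoc, show X * A = 1 - Y by rw [hY, sub_sub_cancel], geom_sum_mul_neg, sub_sub_cancel]

open Finset in
theorem stmt_6_general {m : ℕ} {R : Type*} [Ring R] (A X : Matrix (Fin m) (Fin m) R)
    (Y : Matrix (Fin m) (Fin m) R) (hY : Y = 1 - X * A)
    (p w : ℕ)
    (U Z : Matrix (Fin m) (Fin m) R)
    (hU : U = (∑ d ∈ range (p + 1), Y ^ d) * X)
    (hZ : Z = (∑ j ∈ range w, Y ^ ((p + 1) * j)) * U) :
    (1 : Matrix (Fin m) (Fin m) R) - U * A = Y ^ (p + 1) ∧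
      Z = (∑ j ∈ range (w * (p + 1)), Y ^ j) * X ∧
      (1 : Matrix (Fin m) (Fin m) R) - Z * A = Y ^ (w * (p + 1)) := by
  have hZ' : Z = (∑ j ∈ range (w * (p + 1)), Y ^ j) * X := by
    rw [hZ, hU, ← mul_assoc, geom_sum_pow_mul_geom_sum]
  refine ⟨?_, hZ', ?_⟩
  · rw [hU, one_sub_geom_sum_mul_mul hY]
  · rw [hZ', one_sub_geom_sum_mul_mul hY]

open Finset in
/-- Unified factorization of the order-`h` Newton–Schulz update with `h = w(p+1)`:
with `Y = I - XA`, `U = (∑_{d≤p} Y^d) X` and `Z = (∑_{j<w} Y^((p+1)j)) U`, one has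
`I - UA = Y^(p+1)`, `Z = (∑_{j<h} Yʲ) X` and `I - ZA = Y^h`. -/
theorem stmt_6 {m : ℕ} {R : Type*} [Ring R] (A X : Matrix (Fin m) (Fin m) R)
    (Y : Matrix (Fin m) (Fin m) R) (hY : Y = 1 - X * A)
    (p w : ℕ) (hw : 1 ≤ w)
    (U Z : Matrix (Fin m) (Fin m) R)
    (hU : U = (∑ d ∈ range (p + 1), Y ^ d) * X)
    (hZ : Z = (∑ j ∈ range w, Y ^ ((p + 1) * j)) * U) :
    (1 : Matrix (Fin m) (Fin m) R) - U * A = Y ^ (p + 1) ∧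
      Z = (∑ j ∈ range (w * (p + 1)), Y ^ j) * X ∧
      (1 : Matrix (Fin m) (Fin m) R) - Z * A = Y ^ (w * (p + 1)) :=
  stmt_6_general A X Y hY p w U Z hU hZ
end

section
/- Let A be an n×n matrix over a ring, let T_c and Γ_c be n×n matrices with T_c A = I − Γ_c, and let G_{k−1} be an n×n matrix with F_{k−1} = I − G_{k−1}A. Define, for an integer n ≥ 1, the composite Newton–Schulz update G_k = T_c + Γ_c (Σ_{j=0}^{n−1} F_{k−1}^j) G_{k−1}. Then the new inversion error satisfies F_k = I − G_k A = Γ_c F_{k−1}^n. -/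
open Finset

theorem one_sub_add_mul_geom_sum_mul_mul {R : Type*} [Ring R] {A T Γ G F : R}
    (hT : T * A = 1 - Γ) (hF : F = 1 - G * A) (n : ℕ) :
    1 - (T + Γ * ((∑ j ∈ range n, F ^ j) * G)) * A = Γ * F ^ n := by
  have hGA : G * A = 1 - F := by rw [hF, sub_sub_cancel]
  calc 1 - (T + Γ * ((∑ j ∈ range n, F ^ j) * G)) * A
      = 1 - T * A - Γ * ((∑ j ∈ range n, F ^ j) * (G * A)) := by noncomm_ring
    _ = Γ - Γ * (1 - F ^ n) := by rw [hT, hGA, geom_sum_mul_neg, sub_sub_cancel]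
    _ = Γ * F ^ n := by rw [mul_sub, mul_one, sub_sub_cancel]

theorem stmt_11_general {m : ℕ} {R : Type*} [Ring R] (A : Matrix (Fin m) (Fin m) R)
    (Tc Γc : Matrix (Fin m) (Fin m) R) (hTc : Tc * A = 1 - Γc)
    (Gprev Fprev : Matrix (Fin m) (Fin m) R) (hF : Fprev = 1 - Gprev * A)
    (n : ℕ)
    (Gk : Matrix (Fin m) (Fin m) R)
    (hGk : Gk = Tc + Γc * ((∑ j ∈ range n, Fprev ^ j) * Gprev)) :
    (1 : Matrix (Fin m) (Fin m) R) - Gk * A = Γc * Fprev ^ n := by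
  subst hGk
  exact one_sub_add_mul_geom_sum_mul_mul hTc hF n

open Finset in
/-- Error model of the composite Newton–Schulz update: if `T_c A = I - Γ_c` and
`F_{k-1} = I - G_{k-1} A`, then `G_k = T_c + Γ_c (∑_{j<n} F_{k-1}ʲ) G_{k-1}`
has inversion error `F_k = I - G_k A = Γ_c F_{k-1}ⁿ`. -/
theorem stmt_11 {m : ℕ} {R : Type*} [Ring R] (A : Matrix (Fin m) (Fin m) R)
    (Tc Γc : Matrix (Fin m) (Fin m) R) (hTc : Tc * A = 1 - Γc)
    (Gprev Fprev : Matrix (Fin m) (Fin m) R) (hF : Fprev = 1 - Gprev * A)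
    (n : ℕ) (hn : 1 ≤ n)
    (Gk : Matrix (Fin m) (Fin m) R)
    (hGk : Gk = Tc + Γc * ((∑ j ∈ range n, Fprev ^ j) * Gprev)) :
    (1 : Matrix (Fin m) (Fin m) R) - Gk * A = Γc * Fprev ^ n :=
  stmt_11_general A Tc Γc hTc Gprev Fprev hF n Gk hGk
end

section
/- Let A be an n×n matrix over a ring and let n ≥ 1 be an integer. Suppose the matrices L_{k−1}, G_{k−1} are given, set Γ_k = I − L_{k−1}A and F_{k−1} = I − G_{k−1}A, and define L_k = (Σ_{j=0}^{n−1} Γ_k^j) L_{k−1} and G_k = L_k + Γ_k^n (Σ_{j=0}^{n−1} F_{k−1}^j) G_{k−1}. Then (i) Γ_k^n = I − L_k A, and (ii) the inversion error satisfies F_k = I − G_k A = Γ_k^n F_{k−1}^n. -/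
/-!
A Newton–Schulz step of order `n`, `L ↦ (∑_{j<n} (1 - L A)ʲ) L`, raises the residual
`1 - L A` to its `n`-th power: this is the telescoping identity
`(∑_{j<n} xʲ)(1 - x) = 1 - xⁿ` with `x = 1 - L A`. Applying it to both loops gives (i) and
`1 - (∑_{j<n} Fʲ) G A = Fⁿ`, so `1 - G_k A = Γⁿ - Γⁿ (1 - Fⁿ) = Γⁿ Fⁿ`.
-/

open Finset

def newtonSchulz {R : Type*} [Ring R] (n : ℕ) (L A : R) : R :=
  (∑ j ∈ range n, (1 - L * A) ^ j) * L

theorem one_sub_newtonSchulz_mul {R : Type*} [Ring R] (n : ℕ) (L A : R) :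
    1 - newtonSchulz n L A * A = (1 - L * A) ^ n := by
  rw [newtonSchulz, mul_assoc]
  nth_rewrite 2 [← sub_sub_cancel 1 (L * A)]
  rw [geom_sum_mul_neg, sub_sub_cancel]

theorem stmt_13_general {m : ℕ} {R : Type*} [Ring R] (A : Matrix (Fin m) (Fin m) R)
    (n : ℕ)
    (Lprev Gprev : Matrix (Fin m) (Fin m) R)
    (Γk Fprev : Matrix (Fin m) (Fin m) R)
    (hΓk : Γk = 1 - Lprev * A) (hFprev : Fprev = 1 - Gprev * A)
    (Lk Gk : Matrix (Fin m) (Fin m) R)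
    (hLk : Lk = (∑ j ∈ range n, Γk ^ j) * Lprev)
    (hGk : Gk = Lk + Γk ^ n * ((∑ j ∈ range n, Fprev ^ j) * Gprev)) :
    Γk ^ n = 1 - Lk * A ∧
      (1 : Matrix (Fin m) (Fin m) R) - Gk * A = Γk ^ n * Fprev ^ n := by
  subst hΓk hFprev
  have hL : 1 - Lk * A = (1 - Lprev * A) ^ n := hLk ▸ one_sub_newtonSchulz_mul n Lprev A
  refine ⟨hL.symm, ?_⟩
  rw [hGk, add_mul, ← sub_sub, hL, mul_assoc, ← mul_one_sub]
  exact congrArg _ (one_sub_newtonSchulz_mul n Gprev A)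

open Finset in
/-- One step of the double Newton–Schulz algorithm: with `Γ_k = I - L_{k-1}A`,
`F_{k-1} = I - G_{k-1}A`, `L_k = (∑_{j<n} Γ_kʲ) L_{k-1}` and
`G_k = L_k + Γ_kⁿ (∑_{j<n} F_{k-1}ʲ) G_{k-1}`, one has `Γ_kⁿ = I - L_k A` and
`F_k = I - G_k A = Γ_kⁿ F_{k-1}ⁿ`. -/
theorem stmt_13 {m : ℕ} {R : Type*} [Ring R] (A : Matrix (Fin m) (Fin m) R)
    (n : ℕ) (hn : 1 ≤ n)
    (Lprev Gprev : Matrix (Fin m) (Fin m) R)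
    (Γk Fprev : Matrix (Fin m) (Fin m) R)
    (hΓk : Γk = 1 - Lprev * A) (hFprev : Fprev = 1 - Gprev * A)
    (Lk Gk : Matrix (Fin m) (Fin m) R)
    (hLk : Lk = (∑ j ∈ range n, Γk ^ j) * Lprev)
    (hGk : Gk = Lk + Γk ^ n * ((∑ j ∈ range n, Fprev ^ j) * Gprev)) :
    Γk ^ n = 1 - Lk * A ∧
      (1 : Matrix (Fin m) (Fin m) R) - Gk * A = Γk ^ n * Fprev ^ n :=
  stmt_13_general A n Lprev Gprev Γk Fprev hΓk hFprev Lk Gk hLk hGk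
end

section
/- Let S, D be n×n matrices over a ring with S invertible, A = S − D, and write M = S⁻¹D. Fix integers h ≥ 1 and n ≥ 2. Initialize T₀ = G₀ = (Σ_{j=0}^{h−1} M^j) S⁻¹, Γ₀ = I − T₀A, L₀ = (Σ_{j=0}^{n−1} Γ₀^j) T₀, and iterate for k ≥ 1: Γ_k = I − L_{k−1}A, L_k = (Σ_{j=0}^{n−1} Γ_k^j) L_{k−1}, G_k = L_k + Γ_k^n (Σ_{j=0}^{n−1} F_{k−1}^j) G_{k−1}, where F_{k−1} = I − G_{k−1}A. Then for all k ≥ 0: Γ_k = M^{h n^k} and F_k = I − G_k A = M^{h (k n^{k+1} + n^k)}. -/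
/-!
Everything is governed by the residual `1 - X A` of an approximate inverse `X` of `A`.
A Newton–Schulz step `X ↦ (∑_{j<p} Y^j) X` with `Y = 1 - X A` raises the residual to `Y^p`,
because `(∑_{j<p} Y^j)(1 - Y) = 1 - Y^p`. The truncated Neumann series `G₀` is such a step
from `S⁻¹`, whose residual is `M`; so `Γ₀ = M^h`, and the `L`-iteration gives
`Γ_{k+1} = Γ_k^n`. The correction defining `G_{k+1}` multiplies residuals:
`F_{k+1} = Γ_{k+1}^n F_k^n`, and the exponents of `M` then satisfy the stated recursion.
-/

open Finset

namespace NewtonSchulz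

variable {R : Type*} [Ring R]

def invResidual (A X : R) : R := 1 - X * A

theorem invResidual_geom_sum_mul (A X : R) (p : ℕ) :
    invResidual A ((∑ j ∈ range p, invResidual A X ^ j) * X) = invResidual A X ^ p := by
  have hXA : X * A = 1 - invResidual A X := (sub_sub_cancel 1 (X * A)).symm
  rw [invResidual, mul_assoc, hXA, geom_sum_mul_neg, sub_sub_cancel]

theorem invResidual_add_mul_geom_sum_mul (A L G : R) (p : ℕ) :
    invResidual A (L + invResidual A L * ((∑ j ∈ range p, invResidual A G ^ j) * G)) =
      invResidual A L * invResidual A G ^ p := by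
  have hGA : G * A = 1 - invResidual A G := (sub_sub_cancel 1 (G * A)).symm
  rw [invResidual, add_mul, mul_assoc, mul_assoc, hGA, geom_sum_mul_neg, ← sub_sub, mul_sub,
    mul_one, ← invResidual, sub_sub_cancel]

end NewtonSchulz

open NewtonSchulz

theorem Matrix.invResidual_sub_nonsing_inv {ι R : Type*} [Fintype ι] [DecidableEq ι]
    [CommRing R] {S : Matrix ι ι R} (hS : IsUnit S.det) (D : Matrix ι ι R) :
    invResidual (S - D) S⁻¹ = S⁻¹ * D := by
  rw [invResidual, mul_sub, Matrix.nonsing_inv_mul S hS, sub_sub_cancel]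

open Finset in
theorem stmt_14_general {m : ℕ} {R : Type*} [CommRing R] (S D : Matrix (Fin m) (Fin m) R)
    (hS : IsUnit S.det) (A M : Matrix (Fin m) (Fin m) R)
    (hA : A = S - D) (hM : M = S⁻¹ * D)
    (h n : ℕ)
    (G L Γ : ℕ → Matrix (Fin m) (Fin m) R)
    (hG0 : G 0 = (∑ j ∈ range h, M ^ j) * S⁻¹)
    (hΓ0 : Γ 0 = 1 - G 0 * A)
    (hL0 : L 0 = (∑ j ∈ range n, (Γ 0) ^ j) * G 0)
    (hΓ : ∀ k : ℕ, Γ (k + 1) = 1 - L k * A)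
    (hL : ∀ k : ℕ, L (k + 1) = (∑ j ∈ range n, (Γ (k + 1)) ^ j) * L k)
    (hG : ∀ k : ℕ, G (k + 1) =
      L (k + 1) + (Γ (k + 1)) ^ n * ((∑ j ∈ range n, (1 - G k * A) ^ j) * G k)) :
    ∀ k : ℕ, Γ k = M ^ (h * n ^ k) ∧
      (1 : Matrix (Fin m) (Fin m) R) - G k * A = M ^ (h * (k * n ^ (k + 1) + n ^ k)) := by
  have hres : invResidual A S⁻¹ = M := hA ▸ hM ▸ Matrix.invResidual_sub_nonsing_inv hS D
  have hΓ0M : Γ 0 = M ^ h := by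
    rw [hΓ0, hG0, ← hres]
    exact invResidual_geom_sum_mul A S⁻¹ h
  have hLres : ∀ k, invResidual A (L k) = Γ k ^ n := by
    rintro (_ | k)
    · rw [hL0, hΓ0]; exact invResidual_geom_sum_mul A (G 0) n
    · rw [hL k, hΓ k]; exact invResidual_geom_sum_mul A (L k) n
  have hΓpow : ∀ k, Γ k = M ^ (h * n ^ k) := by
    intro k
    induction k with
    | zero => simpa using hΓ0M
    | succ k ih => rw [hΓ k, ← invResidual, hLres, ih, ← pow_mul, pow_succ, mul_assoc]
  have hFpow : ∀ k, invResidual A (G k) = M ^ (h * (k * n ^ (k + 1) + n ^ k)) := by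
    intro k
    induction k with
    | zero => simpa [invResidual] using hΓ0.symm.trans hΓ0M
    | succ k ih =>
      rw [hG k, ← hLres (k + 1), show 1 - G k * A = invResidual A (G k) from rfl,
        invResidual_add_mul_geom_sum_mul, hLres, hΓpow, ih, ← pow_mul, ← pow_mul, ← pow_add]
      congr 1
      ring
  exact fun k => ⟨hΓpow k, hFpow k⟩

open Finset in
/-- Explicit transient error model of the double Newton–Schulz algorithm with
splitting `A = S - D`, `M = S⁻¹D`, initial expansion order `h` and iteration
order `n`: for all `k`, `Γ_k = M^(h nᵏ)` and
`F_k = I - G_k A = M^(h (k n^(k+1) + nᵏ))`. -/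
theorem stmt_14 {m : ℕ} {R : Type*} [CommRing R] (S D : Matrix (Fin m) (Fin m) R)
    (hS : IsUnit S.det) (A M : Matrix (Fin m) (Fin m) R)
    (hA : A = S - D) (hM : M = S⁻¹ * D)
    (h n : ℕ) (hh : 1 ≤ h) (hn : 2 ≤ n)
    (G L Γ : ℕ → Matrix (Fin m) (Fin m) R)
    (hG0 : G 0 = (∑ j ∈ range h, M ^ j) * S⁻¹)
    (hΓ0 : Γ 0 = 1 - G 0 * A)
    (hL0 : L 0 = (∑ j ∈ range n, (Γ 0) ^ j) * G 0)
    (hΓ : ∀ k : ℕ, Γ (k + 1) = 1 - L k * A)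
    (hL : ∀ k : ℕ, L (k + 1) = (∑ j ∈ range n, (Γ (k + 1)) ^ j) * L k)
    (hG : ∀ k : ℕ, G (k + 1) =
      L (k + 1) + (Γ (k + 1)) ^ n * ((∑ j ∈ range n, (1 - G k * A) ^ j) * G k)) :
    ∀ k : ℕ, Γ k = M ^ (h * n ^ k) ∧
      (1 : Matrix (Fin m) (Fin m) R) - G k * A = M ^ (h * (k * n ^ (k + 1) + n ^ k)) :=
  stmt_14_general S D hS A M hA hM h n G L Γ hG0 hΓ0 hL0 hΓ hL hG
end

section
/- Let A be an n×n matrix over a ring, let p ≥ 2 be an integer, and define the iteration Z_k = (Σ_{j=0}^{p−1} (I − Z_{k−1}A)^j) Z_{k−1} and G_k = G_{k−1} + (I − G_{k−1}A) Z_k for given initial matrices Z₀, G₀. Then, with L_k = I − Z_k A and F_k = I − G_k A, the errors satisfy L_k = L_{k−1}^p and F_k = F_{k−1} L_{k−1}^p for all k ≥ 1. -/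
open Finset

section NewtonSchulz

variable {R : Type*} [Ring R]

theorem one_sub_geom_sum_mul_mul_s15 (z a : R) (p : ℕ) :
    1 - (∑ j ∈ range p, (1 - z * a) ^ j) * z * a = (1 - z * a) ^ p := by
  have h := geom_sum_mul_neg (1 - z * a) p
  rw [sub_sub_cancel] at h
  rw [mul_assoc, h, sub_sub_cancel]

theorem one_sub_add_one_sub_mul_mul (g z a : R) :
    1 - (g + (1 - g * a) * z) * a = (1 - g * a) * (1 - z * a) := by
  noncomm_ring

end NewtonSchulz

theorem stmt_15_general {m : ℕ} {R : Type*} [Ring R] (A : Matrix (Fin m) (Fin m) R)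
    (p : ℕ)
    (Z G : ℕ → Matrix (Fin m) (Fin m) R)
    (hZ : ∀ k : ℕ, Z (k + 1) = (∑ j ∈ range p, (1 - Z k * A) ^ j) * Z k)
    (hG : ∀ k : ℕ, G (k + 1) = G k + (1 - G k * A) * Z (k + 1)) :
    ∀ k : ℕ, (1 : Matrix (Fin m) (Fin m) R) - Z (k + 1) * A = (1 - Z k * A) ^ p ∧
      (1 : Matrix (Fin m) (Fin m) R) - G (k + 1) * A =
        (1 - G k * A) * (1 - Z k * A) ^ p := by
  intro k
  have hL : (1 : Matrix (Fin m) (Fin m) R) - Z (k + 1) * A = (1 - Z k * A) ^ p := by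
    rw [hZ k, one_sub_geom_sum_mul_mul_s15]
  exact ⟨hL, by rw [hG k, one_sub_add_one_sub_mul_mul, hL]⟩

open Finset in
/-- Error model of the algorithm of Srivastava et al. with two Newton–Schulz
loops: with `Z_k = (∑_{j<p} (I - Z_{k-1}A)ʲ) Z_{k-1}` and
`G_k = G_{k-1} + (I - G_{k-1}A) Z_k`, the errors `L_k = I - Z_k A` and
`F_k = I - G_k A` satisfy `L_k = L_{k-1}^p` and `F_k = F_{k-1} L_{k-1}^p`. -/
theorem stmt_15 {m : ℕ} {R : Type*} [Ring R] (A : Matrix (Fin m) (Fin m) R)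
    (p : ℕ) (hp : 2 ≤ p)
    (Z G : ℕ → Matrix (Fin m) (Fin m) R)
    (hZ : ∀ k : ℕ, Z (k + 1) = (∑ j ∈ range p, (1 - Z k * A) ^ j) * Z k)
    (hG : ∀ k : ℕ, G (k + 1) = G k + (1 - G k * A) * Z (k + 1)) :
    ∀ k : ℕ, (1 : Matrix (Fin m) (Fin m) R) - Z (k + 1) * A = (1 - Z k * A) ^ p ∧
      (1 : Matrix (Fin m) (Fin m) R) - G (k + 1) * A =
        (1 - G k * A) * (1 - Z k * A) ^ p :=
  stmt_15_general A p Z G hZ hG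
end

section
/- Let A be an n×n matrix over a ring and n ≥ 1 an integer. Suppose L_{k−1}, G_{k−1}, Γ_{k−1}, F_{k−1} are n×n matrices, Γ_k = Γ_{k−1}^n satisfies Γ_k = I − L_{k−1}A, L_k = (Σ_{j=0}^{n−1} Γ_k^j) L_{k−1}, and ω_{k−1} = L_{k−1} + Γ_{k−1}^n (Σ_{j=0}^{n−1} F_{k−1}^j) G_{k−1}. Then (Σ_{j=0}^{n−1} Γ_k^j) [ ω_{k−1} − (Σ_{j=0}^{n−1} F_{k−1}^j) G_{k−1} ] + (Σ_{j=0}^{n−1} F_{k−1}^j) G_{k−1} = L_k + Γ_k^n (Σ_{j=0}^{n−1} F_{k−1}^j) G_{k−1}; that is, the estimate G_k = L_k + Γ_k^n (Σ_{j=0}^{n−1} F_{k−1}^j) G_{k−1} can be computed recursively from ω_{k−1} with a single additional matrix-by-matrix multiplication. -/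
open Finset

theorem geom_sum_mul_add_mul_sub_add {R : Type*} [Ring R] (x l s : R) (n : ℕ) :
    (∑ j ∈ range n, x ^ j) * (l + x * s - s) + s = (∑ j ∈ range n, x ^ j) * l + x ^ n * s := by
  have telescope : (∑ j ∈ range n, x ^ j) * (x * s - s) = x ^ n * s - s := by
    rw [← sub_one_mul, ← mul_assoc, geom_sum_mul, sub_one_mul]
  rw [add_sub_assoc, mul_add, telescope]
  abel

theorem stmt_19_general {m : ℕ} {R : Type*} [Ring R]
    (n : ℕ)
    (Lprev Gprev Γprev Fprev : Matrix (Fin m) (Fin m) R)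
    (Γk : Matrix (Fin m) (Fin m) R) (hΓk : Γk = Γprev ^ n)
    (Lk ω : Matrix (Fin m) (Fin m) R)
    (hLk : Lk = (∑ j ∈ range n, Γk ^ j) * Lprev)
    (hω : ω = Lprev + Γprev ^ n * ((∑ j ∈ range n, Fprev ^ j) * Gprev)) :
    (∑ j ∈ range n, Γk ^ j) * (ω - (∑ j ∈ range n, Fprev ^ j) * Gprev) +
        (∑ j ∈ range n, Fprev ^ j) * Gprev =
      Lk + Γk ^ n * ((∑ j ∈ range n, Fprev ^ j) * Gprev) := by
  rw [hω, hLk, ← hΓk]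
  exact geom_sum_mul_add_mul_sub_add Γk Lprev _ n

open Finset in
/-- Computationally efficient recursion for the gain matrix of the Richardson
iteration: with `Γ_k = Γ_{k-1}ⁿ = I - L_{k-1}A`, `L_k = (∑_{j<n} Γ_kʲ) L_{k-1}`
and `ω_{k-1} = L_{k-1} + Γ_{k-1}ⁿ (∑_{j<n} F_{k-1}ʲ) G_{k-1}`, one has
`(∑_{j<n} Γ_kʲ)[ω_{k-1} − (∑_{j<n} F_{k-1}ʲ) G_{k-1}] + (∑_{j<n} F_{k-1}ʲ) G_{k-1}
 = L_k + Γ_kⁿ (∑_{j<n} F_{k-1}ʲ) G_{k-1}`. -/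
theorem stmt_19 {m : ℕ} {R : Type*} [Ring R] (A : Matrix (Fin m) (Fin m) R)
    (n : ℕ) (hn : 1 ≤ n)
    (Lprev Gprev Γprev Fprev : Matrix (Fin m) (Fin m) R)
    (Γk : Matrix (Fin m) (Fin m) R) (hΓk : Γk = Γprev ^ n)
    (hΓkL : Γk = 1 - Lprev * A)
    (Lk ω : Matrix (Fin m) (Fin m) R)
    (hLk : Lk = (∑ j ∈ range n, Γk ^ j) * Lprev)
    (hω : ω = Lprev + Γprev ^ n * ((∑ j ∈ range n, Fprev ^ j) * Gprev)) :
    (∑ j ∈ range n, Γk ^ j) * (ω - (∑ j ∈ range n, Fprev ^ j) * Gprev) +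
        (∑ j ∈ range n, Fprev ^ j) * Gprev =
      Lk + Γk ^ n * ((∑ j ∈ range n, Fprev ^ j) * Gprev) :=
  stmt_19_general n Lprev Gprev Γprev Fprev Γk hΓk Lk ω hLk hω
end
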